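/- In any distributive G⁰-algebra, the cancellation law holds: if x ∧ y = x ∧ z and x ∨ y = x ∨ z, then y = z. -/

import Mathlib

class GAlgebra (A : Type*) where
  succ : A → A → A
  one : A
  g1 : ∀ x, succ one x = x
  g2 : ∀ x, succ x one = one
  g3 : ∀ x y, succ (succ x y) y = succ (succ y x) x
  g4 : ∀ x y z, succ x (succ y z) = one → succ y (succ x z) = one

open GAlgebra

local infixr:70 " ≻ " => GAlgebra.succ

class G0Algebra (A : Type*) extends GAlgebra A where
  zero : A
  g17 : ∀ x, succ zero x = one

open G0Algebra

/-!
Since `y ≤ x ∨ y = x ∨ z`, exchange gives `x ≻ z ≤ y ≻ z`, so `(x ≻ z) ∨ (y ≻ z) = y ≻ z`.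
Distributivity then bounds `(x ∧ y) ≻ z` by `y ≻ z`; but `x ∧ y = x ∧ z ≤ z`, so
`(x ∧ y) ≻ z = 1` and hence `y ≤ z`. By symmetry `z ≤ y`.
-/

namespace GAlgebra

variable {A : Type*} [GAlgebra A]

def sup (x y : A) : A := (x ≻ y) ≻ y

theorem succ_self (x : A) : x ≻ x = one := by
  simpa only [g2, g1] using (g3 x one).symm

theorem eq_of_succ_eq_one {x y : A} (hxy : x ≻ y = one) (hyx : y ≻ x = one) : x = y := by
  simpa only [hxy, hyx, g1] using (g3 x y).symm

theorem succ_succ_eq_one_of_succ_eq_one {a b : A} (h : a ≻ b = one) (c : A) :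
    (b ≻ c) ≻ (a ≻ c) = one := by
  have hca : a ≻ ((c ≻ b) ≻ b) = one := g4 _ _ _ (by rw [h, g2])
  rw [g3] at hca
  exact g4 _ _ _ hca

theorem succ_sup_right (x y : A) : y ≻ sup x y = one :=
  g4 _ _ _ (by rw [succ_self, g2])

theorem sup_eq_right_of_succ_eq_one {x y : A} (h : x ≻ y = one) : sup x y = y := by
  rw [sup, h, g1]

end GAlgebra

namespace G0Algebra

variable {A : Type*} [G0Algebra A]

def neg (x : A) : A := x ≻ zero

def inf (x y : A) : A := neg (GAlgebra.sup (neg x) (neg y))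

theorem neg_neg (x : A) : neg (neg x) = x := by
  simpa only [neg, g17, g1] using g3 x zero

theorem inf_succ_right (x y : A) : inf x y ≻ y = one := by
  have h := succ_succ_eq_one_of_succ_eq_one (succ_sup_right (neg x) (neg y)) zero
  rwa [← neg, ← neg, neg_neg] at h

theorem succ_eq_one_of_inf_eq_of_sup_eq {x y z : A}
    (hdist : (inf x y ≻ z) ≻ GAlgebra.sup (x ≻ z) (y ≻ z) = one)
    (hinf : inf x y = inf x z) (hsup : GAlgebra.sup x y = GAlgebra.sup x z) : y ≻ z = one := by
  have hy : y ≻ GAlgebra.sup x z = one := hsup ▸ succ_sup_right x y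
  have hyz : (x ≻ z) ≻ (y ≻ z) = one := g4 _ _ _ hy
  have hxyz : inf x y ≻ z = one := hinf ▸ inf_succ_right x z
  rwa [hxyz, sup_eq_right_of_succ_eq_one hyz, g1] at hdist

end G0Algebra

theorem stmt14 {A : Type*} [G0Algebra A]
    (neg : A → A) (hneg : ∀ a : A, neg a = a ≻ (zero : A))
    (sup : A → A → A) (hsup : ∀ a b : A, sup a b = (a ≻ b) ≻ b)
    (inf : A → A → A) (hinf : ∀ a b : A, inf a b = neg (sup (neg a) (neg b)))
    (hdist : ∀ a b c : A, ((inf a b) ≻ c) ≻ (sup (a ≻ c) (b ≻ c)) = (one : A))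
    (x y z : A) (h1 : inf x y = inf x z) (h2 : sup x y = sup x z) : y = z := by
  obtain rfl : neg = G0Algebra.neg := funext hneg
  obtain rfl : sup = GAlgebra.sup := funext₂ hsup
  obtain rfl : inf = G0Algebra.inf := funext₂ hinf
  exact eq_of_succ_eq_one (succ_eq_one_of_inf_eq_of_sup_eq (hdist x y z) h1 h2)
    (succ_eq_one_of_inf_eq_of_sup_eq (hdist x z y) h1.symm h2.symm)
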